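/- Agreement positions annihilate the reduced polynomial: Let F be a field, 𝓛 = (L_0,…,L_{s−1}), 𝓖 = (G_0,…,G_{w−1}), 𝓣 = (T_0,…,T_{r−1}) bivariate families of linear operators with 𝓣 linearly-extendible, witnessed by M_x, M_y ∈ F[X,Y]^{r×r}, and suppose (𝓣,𝓖) list-composes in terms of 𝓛 at a set A of points of F×F via linear maps h_{G_i,(x,y)} : F^s → F^r. Let c = (c_{(x,y)})_{(x,y)∈A} with each c_{(x,y)} ∈ F^s, and suppose Q_0,…,Q_{w−1} ∈ F[X,Y] satisfy the interpolation constraints: for every (x,y) ∈ A, Σ_{i=0}^{w−1} (Q_i(M_x,M_y) evaluated at (x,y)) · h_{G_i,(x,y)} · c_{(x,y)} = 0. Then for every p ∈ F[X,Y] and every (x,y) ∈ A with 𝓛(p)(x,y) = c_{(x,y)}, the polynomial R_p = Σ_{i=0}^{w−1} Q_i·G_i(p) satisfies 𝓣(R_p)(x,y) = 0. -/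

import Mathlib

open MvPolynomial

noncomputable section

/-- A bivariate family of linear operators is linearly-extendible, witnessed by
matrices `Mx`, `My` over `F[X,Y]`. -/
def LinExt (F : Type) [Field F] (r : ℕ)
    (T : Fin r → MvPolynomial (Fin 2) F →ₗ[F] MvPolynomial (Fin 2) F)
    (Mx My : Matrix (Fin r) (Fin r) (MvPolynomial (Fin 2) F)) : Prop :=
  (∀ p, (fun i => T i (X 0 * p)) = Mx.mulVec fun i => T i p) ∧
  (∀ p, (fun i => T i (X 1 * p)) = My.mulVec fun i => T i p)

/-- `q(Mx, My)`: the matrix obtained from `q ∈ F[X,Y]` by substituting each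
monomial `X^a Y^b` (with its coefficient) by `Mx^a · My^b`. -/
def matSubst (F : Type) [Field F] {r : ℕ} (q : MvPolynomial (Fin 2) F)
    (Mx My : Matrix (Fin r) (Fin r) (MvPolynomial (Fin 2) F)) :
    Matrix (Fin r) (Fin r) (MvPolynomial (Fin 2) F) :=
  ∑ m ∈ q.support, MvPolynomial.coeff m q • (Mx ^ (m 0) * My ^ (m 1))

/-- Agreement positions annihilate the reduced polynomial: if the interpolation
constraints hold and `𝓛(p)(x,y) = c_{(x,y)}` at a point of `A`, then
`𝓣(R_p)(x,y) = 0` for `R_p = Σ_i Q_i · G_i(p)`. -/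
theorem agreement_annihilates_reduced_polynomial
    {F : Type} [Field F] {s w r n : ℕ}
    (L : Fin s → MvPolynomial (Fin 2) F →ₗ[F] MvPolynomial (Fin 2) F)
    (G : Fin w → MvPolynomial (Fin 2) F →ₗ[F] MvPolynomial (Fin 2) F)
    (T : Fin r → MvPolynomial (Fin 2) F →ₗ[F] MvPolynomial (Fin 2) F)
    (Mx My : Matrix (Fin r) (Fin r) (MvPolynomial (Fin 2) F))
    (hT : LinExt F r T Mx My)
    (A : Fin n → F × F)
    (h : Fin w → Fin n → ((Fin s → F) →ₗ[F] (Fin r → F)))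
    (hcomp : ∀ (i : Fin w) (m : Fin n) (p : MvPolynomial (Fin 2) F),
      (fun j : Fin r => eval ![(A m).1, (A m).2] (T j (G i p)))
        = h i m fun j : Fin s => eval ![(A m).1, (A m).2] (L j p))
    (c : Fin n → Fin s → F)
    (Q : Fin w → MvPolynomial (Fin 2) F)
    (hQ : ∀ m : Fin n,
      (∑ i : Fin w,
        ((matSubst F (Q i) Mx My).map (eval ![(A m).1, (A m).2])).mulVec
          (h i m (c m))) = 0) :
    ∀ (p : MvPolynomial (Fin 2) F) (m : Fin n),
      (fun j : Fin s => eval ![(A m).1, (A m).2] (L j p)) = c m →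
      (fun j : Fin r =>
        eval ![(A m).1, (A m).2] (T j (∑ i : Fin w, Q i * G i p))) = 0 := by
  obtain ⟨hx, hy⟩ := hT
  have keyX : ∀ (a : ℕ) (p : MvPolynomial (Fin 2) F),
      (fun i => T i (X 0 ^ a * p)) = (Mx ^ a).mulVec (fun i => T i p) := by
    intro a
    induction a with
    | zero => intro p; simp [Matrix.one_mulVec]
    | succ a ih =>
      intro p
      have e : (X 0 : MvPolynomial (Fin 2) F) ^ (a + 1) * p
          = X 0 * (X 0 ^ a * p) := by ring
      simp only [e]
      rw [hx, ih, Matrix.mulVec_mulVec, ← pow_succ']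
  have keyY : ∀ (a : ℕ) (p : MvPolynomial (Fin 2) F),
      (fun i => T i (X 1 ^ a * p)) = (My ^ a).mulVec (fun i => T i p) := by
    intro a
    induction a with
    | zero => intro p; simp [Matrix.one_mulVec]
    | succ a ih =>
      intro p
      have e : (X 1 : MvPolynomial (Fin 2) F) ^ (a + 1) * p
          = X 1 * (X 1 ^ a * p) := by ring
      simp only [e]
      rw [hy, ih, Matrix.mulVec_mulVec, ← pow_succ']
  have keyMono : ∀ (mo : Fin 2 →₀ ℕ) (co : F) (p : MvPolynomial (Fin 2) F),
      (fun i => T i ((monomial mo co) * p))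
        = (co • (Mx ^ (mo 0) * My ^ (mo 1))).mulVec (fun i => T i p) := by
    intro mo co p
    have hm : ((monomial mo co : MvPolynomial (Fin 2) F)) * p
        = co • (X 0 ^ (mo 0) * (X 1 ^ (mo 1) * p)) := by
      rw [monomial_eq, Finsupp.prod_fintype _ _ (fun i => pow_zero _),
        Fin.prod_univ_two, MvPolynomial.smul_eq_C_mul]
      ring
    funext i
    calc T i ((monomial mo co) * p)
        = co • T i (X 0 ^ (mo 0) * (X 1 ^ (mo 1) * p)) := by rw [hm, map_smul]
      _ = co • ((Mx ^ (mo 0)).mulVec (fun i => T i (X 1 ^ (mo 1) * p)) i) := by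
          rw [congrFun (keyX (mo 0) (X 1 ^ (mo 1) * p)) i]
      _ = co • ((Mx ^ (mo 0)).mulVec ((My ^ (mo 1)).mulVec (fun i => T i p)) i) := by
          rw [keyY]
      _ = (co • (Mx ^ (mo 0) * My ^ (mo 1))).mulVec (fun i => T i p) i := by
          rw [Matrix.mulVec_mulVec, Matrix.smul_mulVec, Pi.smul_apply]
  have key : ∀ (q p : MvPolynomial (Fin 2) F),
      (fun i => T i (q * p)) = (matSubst F q Mx My).mulVec (fun i => T i p) := by
    intro q p
    funext i
    calc T i (q * p)
        = T i (∑ mo ∈ q.support, monomial mo (coeff mo q) * p) := by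
          rw [← Finset.sum_mul, q.support_sum_monomial_coeff]
      _ = ∑ mo ∈ q.support, T i (monomial mo (coeff mo q) * p) := by
          rw [map_sum]
      _ = ∑ mo ∈ q.support,
            ((coeff mo q) • (Mx ^ (mo 0) * My ^ (mo 1))).mulVec (fun i => T i p) i := by
          exact Finset.sum_congr rfl fun mo _ => congrFun (keyMono mo _ p) i
      _ = (matSubst F q Mx My).mulVec (fun i => T i p) i := by
          have sum_mulVec : ∀ (S : Finset (Fin 2 →₀ ℕ))
              (f : (Fin 2 →₀ ℕ) → Matrix (Fin r) (Fin r) (MvPolynomial (Fin 2) F))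
              (v : Fin r → MvPolynomial (Fin 2) F),
              (∑ x ∈ S, f x).mulVec v = ∑ x ∈ S, (f x).mulVec v := by
            classical
            intro S f v
            induction S using Finset.induction_on with
            | empty => simp [Matrix.zero_mulVec]
            | insert _ _ hx ih => rw [Finset.sum_insert hx, Finset.sum_insert hx,
                Matrix.add_mulVec, ih]
          rw [matSubst, sum_mulVec, Finset.sum_apply]
  intro p m hp
  set pt : Fin 2 → F := ![(A m).1, (A m).2] with hpt
  have evalMul : ∀ (Aq : Matrix (Fin r) (Fin r) (MvPolynomial (Fin 2) F))
      (v : Fin r → MvPolynomial (Fin 2) F) (j : Fin r),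
      eval pt (Aq.mulVec v j)
        = (Aq.map (eval pt)).mulVec (fun j => eval pt (v j)) j := by
    intro Aq v j
    simp [Matrix.mulVec, dotProduct, Matrix.map_apply, map_sum]
  funext j
  have step : ∀ i : Fin w,
      eval pt (T j (Q i * G i p))
        = ((matSubst F (Q i) Mx My).map (eval pt)).mulVec (h i m (c m)) j := by
    intro i
    rw [congrFun (key (Q i) (G i p)) j, evalMul]
    congr 1
    rw [show (fun j => eval pt (T j (G i p)))
        = h i m (fun j => eval pt (L j p)) from hcomp i m p, hp]
  calc eval pt (T j (∑ i : Fin w, Q i * G i p))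
      = ∑ i : Fin w, eval pt (T j (Q i * G i p)) := by
        rw [map_sum, map_sum]
    _ = ∑ i : Fin w,
          ((matSubst F (Q i) Mx My).map (eval pt)).mulVec (h i m (c m)) j := by
        exact Finset.sum_congr rfl fun i _ => step i
    _ = 0 := by
        have := congrFun (hQ m) j
        simpa [Finset.sum_apply] using this
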